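/- arXiv:2110.08374 — 4 statements merged into one kernel-verified Lean document; each statement's English description precedes it below -/
import Mathlib

section
/- Let z_1 ≥ z_2 ≥ ... ≥ z_n be nonnegative integers such that there exist nonnegative reals w_{ij} with 0 ≤ w_{ij} < 1, w_{ii} = 0, and row and column sums Σ_j w_{ij} = z_i = Σ_i w_{ij}. Then the Erdős–Gallai inequality Σ_{i=1}^k z_i ≤ k(k−1) + Σ_{i=k+1}^n min(z_i, k) holds for every 1 ≤ k ≤ n. -/
/-- Residual degrees arising from a fractional doubly-stochastic-like matrix with entries
in [0,1), zero diagonal, satisfy the Erdős–Gallai inequalities. -/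
theorem stmt2 (n : ℕ) (hn : 0 < n) (z : Fin n → ℕ)
    (hsorted : ∀ i j : Fin n, i ≤ j → z j ≤ z i)
    (w : Fin n → Fin n → ℝ)
    (hw0 : ∀ i j, 0 ≤ w i j) (hw1 : ∀ i j, w i j < 1)
    (hdiag : ∀ i, w i i = 0)
    (hrow : ∀ i, (∑ j, w i j) = z i)
    (hcol : ∀ j, (∑ i, w i j) = z j) :
    ∀ k : ℕ, 1 ≤ k → k ≤ n →
      ∑ i ∈ Finset.univ.filter (fun i : Fin n => (i : ℕ) < k), z i ≤
        k * (k - 1) + ∑ i ∈ Finset.univ.filter (fun i : Fin n => k ≤ (i : ℕ)), min (z i) k := by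
  intro k hk1 hkn
  classical
  set A := Finset.univ.filter (fun i : Fin n => (i : ℕ) < k) with hA
  set B := Finset.univ.filter (fun i : Fin n => k ≤ (i : ℕ)) with hB
  -- card A = k
  have himg : A.image (fun i : Fin n => (i : ℕ)) = Finset.range k := by
    ext m
    simp only [Finset.mem_image, Finset.mem_range, hA, Finset.mem_filter,
      Finset.mem_univ, true_and]
    constructor
    · rintro ⟨i, hi, rfl⟩; exact hi
    · intro hm; exact ⟨⟨m, lt_of_lt_of_le hm hkn⟩, hm, rfl⟩
  have hcard : A.card = k := by
    rw [← Finset.card_range k, ← himg,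
      Finset.card_image_of_injective _ Fin.val_injective]
  -- reduce to a real inequality
  rw [← Nat.cast_le (α := ℝ)]
  push_cast
  -- decompose LHS
  have hsplit : (∑ i ∈ A, (z i : ℝ))
      = (∑ j ∈ A, ∑ i ∈ A, w i j) + (∑ j ∈ B, ∑ i ∈ A, w i j) := by
    have h1 : (∑ i ∈ A, (z i : ℝ)) = ∑ i ∈ A, ∑ j, w i j := by
      refine Finset.sum_congr rfl fun i _ => (hrow i).symm
    rw [h1, Finset.sum_comm]
    have h2 : (∑ j ∈ A, ∑ i ∈ A, w i j) + (∑ j ∈ B, ∑ i ∈ A, w i j)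
        = ∑ j, ∑ i ∈ A, w i j := by
      have := Finset.sum_filter_add_sum_filter_not (Finset.univ : Finset (Fin n))
        (fun j : Fin n => (j : ℕ) < k) (fun j => ∑ i ∈ A, w i j)
      simpa [hA, hB, not_lt] using this
    rw [← h2]
  rw [hsplit]
  have hmain1 : (∑ j ∈ A, ∑ i ∈ A, w i j) ≤ (k : ℝ) * ((k : ℝ) - 1) := by
    have : ∀ j ∈ A, (∑ i ∈ A, w i j) ≤ ((k : ℝ) - 1) := by
      intro j hj
      have hsub : ∑ i ∈ A, w i j = ∑ i ∈ A.erase j, w i j := by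
        exact (Finset.sum_erase (f := fun i => w i j) A (hdiag j)).symm
      rw [hsub]
      have hb : ∑ i ∈ A.erase j, w i j ≤ (A.erase j).card • (1 : ℝ) :=
        Finset.sum_le_card_nsmul _ _ _ (fun i _ => (hw1 i j).le)
      have hc : (A.erase j).card = k - 1 := by
        rw [Finset.card_erase_of_mem hj, hcard]
      rw [hc] at hb
      have : ((k - 1 : ℕ) : ℝ) = (k : ℝ) - 1 := by
        rw [Nat.cast_sub hk1, Nat.cast_one]
      simpa [this] using hb
    calc (∑ j ∈ A, ∑ i ∈ A, w i j) ≤ ∑ j ∈ A, ((k : ℝ) - 1) :=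
          Finset.sum_le_sum this
      _ = (k : ℝ) * ((k : ℝ) - 1) := by rw [Finset.sum_const, hcard]; ring
  have hmain2 : (∑ j ∈ B, ∑ i ∈ A, w i j) ≤ ∑ j ∈ B, (min (z j) k : ℕ) := by
    push_cast
    refine Finset.sum_le_sum fun j _ => ?_
    refine le_inf ?_ ?_
    · calc (∑ i ∈ A, w i j) ≤ ∑ i, w i j :=
            Finset.sum_le_sum_of_subset_of_nonneg (Finset.subset_univ A)
              (fun i _ _ => hw0 i j)
        _ = (z j : ℝ) := hcol j
    · have hb : ∑ i ∈ A, w i j ≤ A.card • (1 : ℝ) :=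
        Finset.sum_le_card_nsmul _ _ _ (fun i _ => (hw1 i j).le)
      simpa [hcard] using hb
  have := add_le_add hmain1 hmain2
  refine le_trans this ?_
  push_cast
  have : ((k - 1 : ℕ) : ℝ) = (k : ℝ) - 1 := by
    rw [Nat.cast_sub hk1, Nat.cast_one]
  rw [this]
end

section
/- A nonincreasing sequence of nonnegative integers z_1 ≥ ... ≥ z_n with even sum is the degree sequence of a simple graph (no parallel edges or self-loops) if and only if Σ_{i=1}^k z_i ≤ k(k−1) + Σ_{i=k+1}^n min(z_i, k) for all 1 ≤ k ≤ n. -/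
/-!
Necessity: the first `k` vertices span at most `k (k - 1)` edge-ends among themselves, and every
other vertex `j` sends at most `min (d j) k` edges into them.

Sufficiency (Choudum's argument), by induction on `∑ z`. Let `b` be the last index with
`z b > 0` and `a` the last index before `b` where `z` attains its maximum. Lowering `z a` and
`z b` by one keeps the sequence nonincreasing and keeps every Erdős–Gallai inequality: for
`k ≤ a` this needs slack in the inequality at `k`, which comes from parity when `z a ≤ k` and
from the inequality at `a + 1` when `z b ≤ k < z a`. A realization of the lowered sequence is
lifted by adding the edge `ab`, or, if it is already there, by a 2-switch: some `y ≤ b` is not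
adjacent to `a` (since `z a ≤ b`), and it has a neighbour `w` outside `N(b) ∪ {b}`; replace `yw`
by `ay` and `bw`.
-/

open Finset

def IsGraphic {V : Type*} [Fintype V] (d : V → ℕ) : Prop :=
  ∃ G : SimpleGraph V, ∃ _ : DecidableRel G.Adj, ∀ v, G.degree v = d v

theorem isGraphic_zero {V : Type*} [Fintype V] : IsGraphic (0 : V → ℕ) :=
  ⟨⊥, inferInstance, fun v => SimpleGraph.bot_degree v⟩

namespace SimpleGraph

variable {V : Type*} [Fintype V] [DecidableEq V] (G : SimpleGraph V) [DecidableRel G.Adj]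

omit [DecidableEq V] in
theorem degree_eq_sum_ite (x : V) : G.degree x = ∑ w, if G.Adj x w then 1 else 0 := by
  rw [← card_neighborFinset_eq_degree, neighborFinset_eq_filter, card_filter]

theorem sum_degree_le_card_mul_add_sum_min (P : Finset V) :
    ∑ i ∈ P, G.degree i ≤ #P * (#P - 1) + ∑ j ∈ Pᶜ, min (G.degree j) #P := by
  have hsplit (i : V) : G.degree i = #{j ∈ P | G.Adj i j} + #{j ∈ Pᶜ | G.Adj i j} := by
    rw [degree_eq_sum_ite, card_filter, card_filter, sum_add_sum_compl]
  have hinside (i : V) (hi : i ∈ P) : #{j ∈ P | G.Adj i j} ≤ #P - 1 := by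
    rw [← card_erase_of_mem hi]
    exact card_le_card fun j hj =>
      mem_erase.2 ⟨(G.ne_of_adj (mem_filter.1 hj).2).symm, (mem_filter.1 hj).1⟩
  have hacross (j : V) : #{i ∈ P | G.Adj i j} ≤ G.degree j := by
    rw [← card_neighborFinset_eq_degree]
    exact card_le_card fun i hi => (mem_neighborFinset _ _ _).2 (mem_filter.1 hi).2.symm
  calc ∑ i ∈ P, G.degree i
      = ∑ i ∈ P, #{j ∈ P | G.Adj i j} + ∑ i ∈ P, #{j ∈ Pᶜ | G.Adj i j} := by
        simp only [hsplit, sum_add_distrib]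
    _ ≤ ∑ _i ∈ P, (#P - 1) + ∑ j ∈ Pᶜ, #{i ∈ P | G.Adj i j} :=
        add_le_add (sum_le_sum hinside) (sum_card_bipartiteAbove_eq_sum_card_bipartiteBelow _).le
    _ ≤ #P * (#P - 1) + ∑ j ∈ Pᶜ, min (G.degree j) #P := by
        rw [sum_const, smul_eq_mul]
        gcongr with j
        exact le_min (hacross j) (card_filter_le _ _)

omit [DecidableEq V] in
theorem exists_not_adj_of_degree_lt_card {a : V} (s : Finset V) (h : G.degree a < #s) :
    ∃ y ∈ s, ¬G.Adj a y := by
  by_contra! hs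
  have : s ⊆ G.neighborFinset a := fun y hy => (mem_neighborFinset _ _ _).2 (hs y hy)
  exact (card_le_card this).not_gt (by rwa [card_neighborFinset_eq_degree])

theorem exists_adj_not_adj_of_degree_le {a b y : V} (hab : G.Adj a b) (hya : y ≠ a)
    (hay : ¬G.Adj a y) (hdeg : G.degree b ≤ G.degree y) :
    ∃ w, G.Adj y w ∧ w ≠ b ∧ ¬G.Adj b w := by
  by_contra! hw
  -- otherwise `N(y) \ {b}` fits into `N(b) \ {a, y}`, which forces `deg y < deg b`
  have hsub : (G.neighborFinset y).erase b ⊆ ((G.neighborFinset b).erase a).erase y := by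
    intro w hw'
    simp only [mem_erase, mem_neighborFinset] at hw' ⊢
    exact ⟨fun h => G.ne_of_adj hw'.2 h.symm, fun h => hay (h ▸ hw'.2.symm), hw _ hw'.2 hw'.1⟩
  have hcard := card_le_card hsub
  have hb : #((G.neighborFinset b).erase a) + 1 = G.degree b := by
    rw [card_erase_add_one ((mem_neighborFinset _ _ _).2 hab.symm), card_neighborFinset_eq_degree]
  by_cases hyb : G.Adj y b
  · have hy : #((G.neighborFinset y).erase b) + 1 = G.degree y := by
      rw [card_erase_add_one ((mem_neighborFinset _ _ _).2 hyb), card_neighborFinset_eq_degree]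
    have := card_erase_add_one (s := (G.neighborFinset b).erase a)
      (mem_erase.2 ⟨hya, (mem_neighborFinset _ _ _).2 hyb.symm⟩)
    omega
  · rw [erase_eq_of_notMem (by simpa using hyb), card_neighborFinset_eq_degree] at hcard
    have := card_le_card (erase_subset y ((G.neighborFinset b).erase a))
    omega

theorem degree_sup_edge {u v : V} (huv : u ≠ v) (h : ¬G.Adj u v) (x : V) :
    (G ⊔ edge u v).degree x =
      G.degree x + (if x = u then 1 else 0) + (if x = v then 1 else 0) := by
  have key (w : V) : (if (G ⊔ edge u v).Adj x w then 1 else 0) =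
      (if G.Adj x w then 1 else 0) + (if x = u then if w = v then 1 else 0 else 0) +
        (if x = v then if w = u then 1 else 0 else 0) := by
    have := G.adj_comm u v
    simp only [sup_adj, edge_adj]
    split_ifs <;> grind
  simp only [degree_eq_sum_ite, key, sum_add_distrib]
  split_ifs <;> simp

theorem degree_deleteEdges_add {u v : V} (h : G.Adj u v) (x : V) :
    (G.deleteEdges {s(u, v)}).degree x + (if x = u then 1 else 0) + (if x = v then 1 else 0) =
      G.degree x := by
  have key (w : V) : (if (G.deleteEdges {s(u, v)}).Adj x w then 1 else 0) +
      (if x = u then if w = v then 1 else 0 else 0) +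
        (if x = v then if w = u then 1 else 0 else 0) = (if G.Adj x w then 1 else 0) := by
    have := G.ne_of_adj h
    have := G.adj_comm u v
    simp only [deleteEdges_adj, Set.mem_singleton_iff, Sym2.eq_iff]
    split_ifs <;> grind
  simp only [degree_eq_sum_ite, ← key, sum_add_distrib]
  split_ifs <;> simp

theorem isGraphic_degree_add_single_add_single {a b y : V} (hab : a ≠ b) (hya : y ≠ a)
    (hay : ¬G.Adj a y) (hdeg : G.degree b ≤ G.degree y) :
    IsGraphic ((G.degree ·) + Pi.single a 1 + Pi.single b 1) := by
  by_cases hadj : G.Adj a b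
  · obtain ⟨w, hyw, hwb, hbw⟩ := G.exists_adj_not_adj_of_degree_le hadj hya hay hdeg
    have hyb : y ≠ b := by rintro rfl; exact hay hadj
    have h₁ : ¬(G.deleteEdges {s(y, w)}).Adj a y := fun h => hay h.1
    have h₂ : ¬(G.deleteEdges {s(y, w)} ⊔ edge a y).Adj b w := by
      simp [edge_adj, hbw, hab.symm, hyb.symm]
    refine ⟨G.deleteEdges {s(y, w)} ⊔ edge a y ⊔ edge b w, inferInstance, fun x => ?_⟩
    have := G.degree_deleteEdges_add hyw x
    rw [degree_sup_edge _ hwb.symm h₂, degree_sup_edge _ hya.symm h₁]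
    simp only [Pi.add_apply, Pi.single_apply]
    split_ifs at this ⊢ <;> omega
  · exact ⟨G ⊔ edge a b, inferInstance, fun x => by
      simp [degree_sup_edge G hab hadj, Pi.single_apply]⟩

end SimpleGraph

theorem Nat.mul_le_mul_pred_add {k m : ℕ} (h : m ≤ k) : k * m ≤ k * (k - 1) + m := by
  rcases k with _ | k
  · simp
  · rw [Nat.add_sub_cancel, add_mul, one_mul, mul_comm (k + 1)]
    exact Nat.add_le_add_right (Nat.mul_le_mul_left k h) m

theorem Nat.mul_min_le_mul_min {k t x : ℕ} (h : k ≤ t) : k * min x t ≤ t * min x k := by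
  rcases le_total x k with hx | hx
  · rw [min_eq_left hx, min_eq_left (hx.trans h)]
    exact Nat.mul_le_mul_right x h
  · rw [min_eq_right hx, mul_comm t k]
    exact Nat.mul_le_mul_left k (min_le_right x t)

section Sequences

variable {n : ℕ}

theorem card_filter_val_lt_of_le {k : ℕ} (hk : k ≤ n) :
    #(univ.filter fun i : Fin n => (i : ℕ) < k) = k := by
  rw [Fin.card_filter_val_lt, min_eq_right hk]

theorem card_filter_le_val_lt {k t : ℕ} (ht : t ≤ n) :
    #(univ.filter fun i : Fin n => k ≤ (i : ℕ) ∧ (i : ℕ) < t) = t - k := by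
  rw [← card_map Fin.valEmbedding, ← Nat.card_Ico k t]
  congr 1
  ext j
  simp [Fin.exists_iff]
  omega

theorem compl_filter_val_lt (k : ℕ) :
    (univ.filter fun i : Fin n => (i : ℕ) < k)ᶜ = univ.filter fun i : Fin n => k ≤ (i : ℕ) := by
  ext; simp

def headSum (z : Fin n → ℕ) (k : ℕ) : ℕ :=
  ∑ i ∈ univ.filter (fun i : Fin n => (i : ℕ) < k), z i

def egBound (z : Fin n → ℕ) (k : ℕ) : ℕ :=
  k * (k - 1) + ∑ i ∈ univ.filter (fun i : Fin n => k ≤ (i : ℕ)), min (z i) k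

def SatisfiesErdosGallai (z : Fin n → ℕ) : Prop :=
  ∀ k, 1 ≤ k → k ≤ n → headSum z k ≤ egBound z k

theorem satisfiesErdosGallai_degree (G : SimpleGraph (Fin n)) [DecidableRel G.Adj] :
    SatisfiesErdosGallai (G.degree ·) := by
  intro k _ hk
  have := G.sum_degree_le_card_mul_add_sum_min (univ.filter fun i : Fin n => (i : ℕ) < k)
  rwa [card_filter_val_lt_of_le hk, compl_filter_val_lt] at this

theorem headSum_add_sum_filter_le (z : Fin n → ℕ) (k : ℕ) :
    headSum z k + ∑ i ∈ univ.filter (fun i : Fin n => k ≤ (i : ℕ)), z i = ∑ i, z i := by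
  rw [headSum, ← compl_filter_val_lt, sum_add_sum_compl]

theorem headSum_eq_mul {z : Fin n → ℕ} {k c : ℕ} (hk : k ≤ n)
    (hz : ∀ i : Fin n, (i : ℕ) < k → z i = c) : headSum z k = k * c := by
  rw [headSum, sum_congr rfl fun i hi => hz i (mem_filter.1 hi).2, sum_const,
    card_filter_val_lt_of_le hk, smul_eq_mul]

theorem egBound_eq_mul_pred_add {z : Fin n → ℕ} {k t : ℕ} (hkt : k ≤ t) (ht : t ≤ n)
    (hz : ∀ i : Fin n, k ≤ (i : ℕ) → (i : ℕ) < t → k ≤ z i) :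
    egBound z k =
      k * (t - 1) + ∑ i ∈ univ.filter (fun i : Fin n => t ≤ (i : ℕ)), min (z i) k := by
  have hsplit := sum_filter_add_sum_filter_not (univ.filter fun i : Fin n => k ≤ (i : ℕ))
    (fun i => (i : ℕ) < t) (fun i => min (z i) k)
  simp only [filter_filter] at hsplit
  have hblock : ∑ i ∈ univ.filter (fun i : Fin n => k ≤ (i : ℕ) ∧ (i : ℕ) < t), min (z i) k =
      (t - k) * k := by
    rw [sum_congr rfl fun i hi => min_eq_right (hz i (mem_filter.1 hi).2.1 (mem_filter.1 hi).2.2),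
      sum_const, card_filter_le_val_lt ht, smul_eq_mul]
  have htail : univ.filter (fun i : Fin n => k ≤ (i : ℕ) ∧ ¬(i : ℕ) < t) =
      univ.filter (fun i : Fin n => t ≤ (i : ℕ)) := by
    ext i
    simp only [mem_filter, mem_univ, true_and]
    omega
  rw [egBound, ← hsplit, hblock, htail, ← add_assoc]
  congr 1
  rcases Nat.eq_zero_or_pos k with rfl | hk
  · simp
  · rw [show t - 1 = (k - 1) + (t - k) by omega, mul_add, mul_comm (t - k)]

theorem headSum_add_single_add_single (z : Fin n → ℕ) (a b : Fin n) (k : ℕ) :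
    headSum (z + Pi.single a 1 + Pi.single b 1) k =
      headSum z k + (if (a : ℕ) < k then 1 else 0) + (if (b : ℕ) < k then 1 else 0) := by
  simp [headSum, sum_add_distrib, sum_pi_single']

theorem egBound_add_single_add_single {z : Fin n → ℕ} {a b : Fin n} (hab : a ≠ b) (k : ℕ) :
    egBound (z + Pi.single a 1 + Pi.single b 1) k = egBound z k +
      (if k ≤ a ∧ z a < k then 1 else 0) + (if k ≤ b ∧ z b < k then 1 else 0) := by
  have key (i : Fin n) :
      min ((z + Pi.single a 1 + Pi.single b 1 : Fin n → ℕ) i) k = min (z i) k +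
        (Pi.single a (if z a < k then 1 else 0) : Fin n → ℕ) i +
          (Pi.single b (if z b < k then 1 else 0) : Fin n → ℕ) i := by
    simp only [Pi.add_apply, Pi.single_apply]
    split_ifs <;> subst_vars <;> omega
  simp only [egBound, key, sum_add_distrib, sum_pi_single', mem_filter, mem_univ, true_and,
    ite_and]
  ring

theorem SatisfiesErdosGallai.of_eq_add_single_add_single {Z z : Fin n → ℕ} {a b : Fin n}
    (hab : a < b) (hZz : Z = z + Pi.single a 1 + Pi.single b 1) (hEG : SatisfiesErdosGallai Z)
    (hslack : ∀ k : ℕ, 1 ≤ k → k ≤ a → headSum Z k + (if Z a ≤ k then 1 else 0) +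
      (if Z b ≤ k then 1 else 0) ≤ egBound Z k) :
    SatisfiesErdosGallai z := by
  subst hZz
  intro k hk1 hkn
  have hab' : (a : ℕ) < b := hab
  have h := hEG k hk1 hkn
  rw [headSum_add_single_add_single, egBound_add_single_add_single hab.ne] at h
  by_cases hka : k ≤ a
  · have h' := hslack k hk1 hka
    rw [headSum_add_single_add_single, egBound_add_single_add_single hab.ne] at h'
    simp only [Pi.add_apply, Pi.single_eq_same, Pi.single_eq_of_ne hab.ne,
      Pi.single_eq_of_ne hab.ne.symm] at h'
    split_ifs at h h' <;> omega
  · split_ifs at h <;> omega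

theorem headSum_add_two_le_egBound {Z : Fin n → ℕ} {a b : Fin n} {k : ℕ}
    (heven : Even (∑ i, Z i)) (hab : a < b) (hb : 0 < Z b) (hmax : ∀ i, Z i ≤ Z a)
    (hconst : ∀ i ≤ a, Z i = Z a) (hka : k ≤ a) (hak : Z a ≤ k) :
    headSum Z k + 2 ≤ egBound Z k := by
  have hL : headSum Z k = k * Z a :=
    headSum_eq_mul (by omega) fun i hi => hconst i (Fin.le_def.2 (by omega))
  have hmin : ∑ i ∈ univ.filter (fun i : Fin n => k ≤ (i : ℕ)), min (Z i) k =
      ∑ i ∈ univ.filter (fun i : Fin n => k ≤ (i : ℕ)), Z i :=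
    sum_congr rfl fun i _ => min_eq_left ((hmax i).trans hak)
  have hpair : Z a + Z b ≤ ∑ i ∈ univ.filter (fun i : Fin n => k ≤ (i : ℕ)), Z i := by
    rw [← sum_pair hab.ne]
    refine sum_le_sum_of_subset fun i hi => ?_
    have : (a : ℕ) < b := hab
    simp only [mem_insert, mem_singleton] at hi
    rcases hi with rfl | rfl <;> simp <;> omega
  have htotal := headSum_add_sum_filter_le Z k
  have hkk := Nat.mul_le_mul_pred_add hak
  -- both sides add up to `k * (k - 1) + ∑ i, Z i`, which is even
  obtain ⟨r, hr⟩ := heven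
  obtain ⟨s, hs⟩ := Nat.even_mul_pred_self k
  rw [egBound, hmin]
  omega

theorem headSum_lt_egBound {Z : Fin n → ℕ} {a b : Fin n} {k : ℕ} (hab : a < b) (hb : 0 < Z b)
    (hconst : ∀ i ≤ a, Z i = Z a) (hEG : headSum Z (a + 1) ≤ egBound Z (a + 1))
    (hka : k ≤ a) (hbk : Z b ≤ k) (hak : k < Z a) : headSum Z k < egBound Z k := by
  set t := (a : ℕ) + 1
  have hab' : (a : ℕ) < b := hab
  have hLk : headSum Z k = k * Z a :=
    headSum_eq_mul (by omega) fun i hi => hconst i (Fin.le_def.2 (by omega))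
  have hLt : headSum Z t = t * Z a :=
    headSum_eq_mul a.isLt fun i hi => hconst i (Fin.le_def.2 (by omega))
  set U : ℕ → ℕ := fun j => ∑ i ∈ univ.filter (fun i : Fin n => t ≤ (i : ℕ)), min (Z i) j
  have hRk : egBound Z k = k * (t - 1) + U k :=
    egBound_eq_mul_pred_add (by omega) a.isLt fun i _ hi =>
      hconst i (Fin.le_def.2 (by omega)) ▸ hak.le
  -- the inequality at `t`, scaled by `k / t`, is strictly stronger than the one wanted at `k`
  have hU : k * U t < t * U k := by
    simp only [U, mul_sum]
    refine sum_lt_sum (fun i _ => Nat.mul_min_le_mul_min (by omega)) ⟨b, by simp; omega, ?_⟩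
    rw [min_eq_left (by omega), min_eq_left hbk]
    exact Nat.mul_lt_mul_of_pos_right (by omega) hb
  have key : t * (k * Z a) < t * (k * (t - 1) + U k) :=
    calc t * (k * Z a) = k * headSum Z t := by rw [hLt]; ring
      _ ≤ k * (t * (t - 1) + U t) := Nat.mul_le_mul_left k hEG
      _ = t * (k * (t - 1)) + k * U t := by ring
      _ < t * (k * (t - 1) + U k) := by rw [mul_add]; exact Nat.add_lt_add_left hU _
  rw [hLk, hRk]
  exact Nat.lt_of_mul_lt_mul_left key

theorem headSum_add_ite_le_egBound {Z : Fin n → ℕ} {a b : Fin n} {k : ℕ} (hZ : Antitone Z)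
    (heven : Even (∑ i, Z i)) (hEG : SatisfiesErdosGallai Z) (hab : a < b) (hb : 0 < Z b)
    (hconst : ∀ i ≤ a, Z i = Z a) (hk : 1 ≤ k) (hka : k ≤ a) :
    headSum Z k + (if Z a ≤ k then 1 else 0) + (if Z b ≤ k then 1 else 0) ≤ egBound Z k := by
  have hba := hZ hab.le
  by_cases hak : Z a ≤ k
  · have hmax (i : Fin n) : Z i ≤ Z a :=
      (hZ (Fin.le_def.2 (Nat.zero_le _))).trans
        (hconst ⟨0, a.pos⟩ (Fin.le_def.2 (Nat.zero_le _))).le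
    rw [if_pos hak, if_pos (hba.trans hak)]
    exact headSum_add_two_le_egBound heven hab hb hmax hconst hka hak
  by_cases hbk : Z b ≤ k
  · rw [if_neg hak, if_pos hbk]
    exact headSum_lt_egBound hab hb hconst (hEG _ (by omega) a.isLt) hka hbk (by omega)
  · rw [if_neg hak, if_neg hbk]
    exact hEG k hk (by omega)

theorem SatisfiesErdosGallai.apply_zero_le {Z : Fin n → ℕ} (hEG : SatisfiesErdosGallai Z)
    {b : Fin n} (hzero : ∀ i, b < i → Z i = 0) : Z ⟨0, b.pos⟩ ≤ b := by
  have h1 := hEG 1 le_rfl b.pos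
  rw [headSum_eq_mul b.pos (c := Z ⟨0, b.pos⟩) fun i hi => congrArg Z (Fin.ext (by simp; omega)),
    egBound] at h1
  calc Z ⟨0, b.pos⟩ ≤ ∑ i ∈ univ.filter (fun i : Fin n => 1 ≤ (i : ℕ)), min (Z i) 1 := by
        simpa using h1
    _ ≤ ∑ i ∈ (Iic b).erase ⟨0, b.pos⟩, min (Z i) 1 := sum_le_sum_of_ne_zero fun i hi hi' => by
        simp only [mem_filter, mem_univ, true_and] at hi
        refine mem_erase.2 ⟨fun h => by simp [h] at hi, mem_Iic.2 (not_lt.1 fun hbi => ?_)⟩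
        simp [hzero i hbi] at hi'
    _ ≤ #((Iic b).erase ⟨0, b.pos⟩) * 1 :=
        (smul_eq_mul (α := ℕ) _ _) ▸ sum_le_card_nsmul _ _ 1 fun i _ => min_le_right _ 1
    _ = b := by
        rw [mul_one, card_erase_of_mem (mem_Iic.2 (Fin.le_def.2 (Nat.zero_le _))), Fin.card_Iic]
        simp

theorem exists_reduction_indices {Z : Fin n → ℕ} (hZ : Antitone Z)
    (hEG : SatisfiesErdosGallai Z) (hpos : ∑ i, Z i ≠ 0) :
    ∃ a b : Fin n, a < b ∧ 0 < Z b ∧ Z a ≤ b ∧ (∀ i, b < i → Z i = 0) ∧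
      (∀ i ≤ a, Z i = Z a) ∧ ∀ i, a < i → i ≠ b → Z i < Z a := by
  have hne : (univ.filter fun i => Z i ≠ 0).Nonempty := by
    obtain ⟨i, -, hi⟩ := exists_ne_zero_of_sum_ne_zero hpos
    exact ⟨i, by simpa using hi⟩
  set b := (univ.filter fun i => Z i ≠ 0).max' hne
  have hb : Z b ≠ 0 := (mem_filter.1 (max'_mem _ hne)).2
  have hzero (i : Fin n) (hi : b < i) : Z i = 0 := by
    by_contra h
    exact (le_max' _ i (by simpa using h)).not_gt hi
  set i₀ : Fin n := ⟨0, b.pos⟩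
  have hi₀le (i : Fin n) : i₀ ≤ i := Fin.le_def.2 (Nat.zero_le _)
  have hi₀b : Z i₀ ≤ b := hEG.apply_zero_le hzero
  have hi₀ : i₀ < b := by
    have := hZ (hi₀le b)
    exact Fin.lt_def.2 (by simp only [i₀]; omega)
  have hne' : (univ.filter fun i => i < b ∧ Z i = Z i₀).Nonempty := ⟨i₀, by simpa using hi₀⟩
  set a := (univ.filter fun i => i < b ∧ Z i = Z i₀).max' hne'
  obtain ⟨hab, ha⟩ : a < b ∧ Z a = Z i₀ := (mem_filter.1 (max'_mem _ hne')).2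
  have hamax (i : Fin n) (hi : i < b) (hi' : Z i = Z i₀) : i ≤ a :=
    le_max' _ i (by simpa using ⟨hi, hi'⟩)
  refine ⟨a, b, hab, Nat.pos_of_ne_zero hb, ha ▸ hi₀b, hzero, fun i hi => ?_, fun i hai hib => ?_⟩
  · exact le_antisymm (ha ▸ hZ (hi₀le i)) (hZ hi)
  · obtain hib | hbi := lt_or_gt_of_ne hib
    · exact lt_of_le_of_ne (ha ▸ hZ (hi₀le i)) fun h => (hamax i hib (h.trans ha)).not_gt hai
    · rw [hzero i hbi]
      exact (Nat.pos_of_ne_zero hb).trans_le (hZ hab.le)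

theorem antitone_sub_single_sub_single {Z : Fin n → ℕ} {a b : Fin n} (hZ : Antitone Z)
    (hab : a < b) (hzero : ∀ i, b < i → Z i = 0) (hlt : ∀ i, a < i → i ≠ b → Z i < Z a) :
    Antitone (Z - Pi.single a 1 - Pi.single b 1) := by
  intro i j hij
  obtain rfl | hij := hij.eq_or_lt
  · rfl
  have hji := hZ hij.le
  have hba := hZ hab.le
  have hzj := hzero j
  have hltj := hlt j
  simp only [Pi.sub_apply, Pi.single_apply]
  split_ifs <;> subst_vars <;> grind

theorem exists_reduction {Z : Fin n → ℕ} (hZ : Antitone Z) (heven : Even (∑ i, Z i))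
    (hEG : SatisfiesErdosGallai Z) (hpos : ∑ i, Z i ≠ 0) :
    ∃ (a b : Fin n) (z : Fin n → ℕ), a < b ∧ z a < b ∧ Z = z + Pi.single a 1 + Pi.single b 1 ∧
      Antitone z ∧ SatisfiesErdosGallai z := by
  obtain ⟨a, b, hab, hb, hZa, hzero, hconst, hlt⟩ := exists_reduction_indices hZ hEG hpos
  have ha : 0 < Z a := hb.trans_le (hZ hab.le)
  have hZz : Z = Z - Pi.single a 1 - Pi.single b 1 + Pi.single a 1 + Pi.single b 1 := by
    ext i
    simp only [Pi.add_apply, Pi.sub_apply, Pi.single_apply]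
    split_ifs <;> subst_vars <;> omega
  refine ⟨a, b, _, hab, ?_, hZz, antitone_sub_single_sub_single hZ hab hzero hlt,
    hEG.of_eq_add_single_add_single hab hZz fun k hk hka =>
      headSum_add_ite_le_egBound hZ heven hEG hab hb hconst hk hka⟩
  simp [hab.ne]
  omega

theorem isGraphic_of_satisfiesErdosGallai {Z : Fin n → ℕ} (hZ : Antitone Z)
    (heven : Even (∑ i, Z i)) (hEG : SatisfiesErdosGallai Z) : IsGraphic Z := by
  induction hs : ∑ i, Z i using Nat.strong_induction_on generalizing Z with
  | _ s ih =>
  obtain rfl | hpos := eq_or_ne s 0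
  · obtain rfl : Z = 0 := funext fun i => sum_eq_zero_iff.1 hs i (mem_univ i)
    exact isGraphic_zero
  obtain ⟨a, b, z, hab, hza, rfl, hz, hzEG⟩ := exists_reduction hZ heven hEG (hs ▸ hpos)
  have hsum : ∑ i, (z + Pi.single a 1 + Pi.single b 1 : Fin n → ℕ) i = ∑ i, z i + 2 := by
    simp [sum_add_distrib]
  obtain ⟨G, _, hG⟩ :=
    ih _ (by omega) hz ((Nat.even_add.1 (hsum ▸ heven)).2 even_two) hzEG rfl
  obtain ⟨y, hy, hay⟩ := G.exists_not_adj_of_degree_lt_card (a := a) ((Iic b).erase a) (by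
    rw [card_erase_of_mem (mem_Iic.2 hab.le), Fin.card_Iic, hG]
    omega)
  obtain ⟨hya, hyb⟩ := mem_erase.1 hy
  obtain rfl : (G.degree ·) = z := funext hG
  exact G.isGraphic_degree_add_single_add_single hab.ne hya hay (hz (mem_Iic.1 hyb))

end Sequences

/-- Erdős–Gallai theorem: a nonincreasing sequence of naturals with even sum is graphical
iff the Erdős–Gallai inequalities hold. -/
theorem stmt3 (n : ℕ) (z : Fin n → ℕ)
    (hsorted : ∀ i j : Fin n, i ≤ j → z j ≤ z i)
    (heven : Even (∑ i, z i)) :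
    (∃ G : SimpleGraph (Fin n), ∃ _inst : DecidableRel G.Adj, ∀ i, G.degree i = z i) ↔
    (∀ k : ℕ, 1 ≤ k → k ≤ n →
      ∑ i ∈ Finset.univ.filter (fun i : Fin n => (i : ℕ) < k), z i ≤
        k * (k - 1) + ∑ i ∈ Finset.univ.filter (fun i : Fin n => k ≤ (i : ℕ)), min (z i) k) := by
  refine ⟨?_, isGraphic_of_satisfiesErdosGallai hsorted heven⟩
  rintro ⟨G, _, hG⟩
  obtain rfl : (G.degree ·) = z := funext hG
  exact satisfiesErdosGallai_degree G
end

section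
/- Every multigraph in which every vertex has degree exactly 2r (for a positive integer r) decomposes into r edge-disjoint 2-factors, i.e., r edge-disjoint spanning subgraphs in each of which every vertex has degree 2. -/
section
variable {V : Type*} [Fintype V] [DecidableEq V]

lemma walk_lemma : ∀ (N : ℕ) (w : V → V → ℕ) (a x : V),
    (∑ u, ∑ v, w u v) ≤ N →
    (∀ u v, w u v = w v u) → (∀ v, w v v = 0) →
    (∀ v, Even ((∑ u, w v u) + (if v = a then 1 else 0) + (if v = x then 1 else 0))) →
    ∃ e : V → V → ℕ,
      (∀ u v, e u v + e v u ≤ w u v) ∧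
      (∀ v, (∑ u, e v u) + (if v = a then 1 else 0)
            = (∑ u, e u v) + (if v = x then 1 else 0)) := by
  intro N
  induction N with
  | zero =>
    intro w a x hN hsym hloop hpar
    by_cases hax : x = a
    · exact ⟨0, by simp, by simp [hax]⟩
    · exfalso
      have hodd := hpar x
      rw [if_neg hax, if_pos rfl, Nat.even_iff] at hodd
      have hle : (∑ u, w x u) ≤ ∑ u, ∑ v, w u v :=
        Finset.single_le_sum (f := fun u => ∑ v, w u v) (fun _ _ => Nat.zero_le _)
          (Finset.mem_univ x)
      omega
  | succ N ih =>
    intro w a x hN hsym hloop hpar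
    by_cases hax : x = a
    · exact ⟨0, by simp, by simp [hax]⟩
    -- x has odd degree, pick an edge x-y
    have hodd := hpar x
    rw [if_neg hax, if_pos rfl, Nat.even_iff] at hodd
    have hpos : (∑ u, w x u) ≠ 0 := by omega
    obtain ⟨y, -, hy⟩ := Finset.exists_ne_zero_of_sum_ne_zero hpos
    have hxy : x ≠ y := fun h => hy (by rw [h, hloop])
    set ind : V → V → ℕ := fun u v =>
      if (u = x ∧ v = y) ∨ (u = y ∧ v = x) then 1 else 0 with hind
    have hindle : ∀ u v, ind u v ≤ w u v := by
      intro u v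
      simp only [hind]
      split
      · rename_i h
        rcases h with ⟨h1, h2⟩ | ⟨h1, h2⟩
        · subst h1; subst h2; omega
        · subst h1; subst h2; rw [hsym]; omega
      · omega
    set w' : V → V → ℕ := fun u v => w u v - ind u v with hw'
    have hkey : ∀ u v, w' u v + ind u v = w u v := fun u v =>
      Nat.sub_add_cancel (hindle u v)
    have hrowind : ∀ v, (∑ u, ind v u)
        = (if v = x then 1 else 0) + (if v = y then 1 else 0) := by
      intro v
      rcases eq_or_ne v x with hvx | hvx
      · rw [hvx]
        simp [hind, hxy, Ne.symm hxy, Finset.sum_ite_eq']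
      · rcases eq_or_ne v y with hvy | hvy
        · rw [hvy]
          simp [hind, hxy, Ne.symm hxy, Finset.sum_ite_eq']
        · simp [hind, hvx, hvy]
    have hcolind : ∀ v, (∑ u, ind u v)
        = (if v = x then 1 else 0) + (if v = y then 1 else 0) := by
      intro v
      rcases eq_or_ne v x with hvx | hvx
      · rw [hvx]
        simp [hind, hxy, Ne.symm hxy, Finset.sum_ite_eq, Finset.sum_ite_eq']
      · rcases eq_or_ne v y with hvy | hvy
        · rw [hvy]
          simp [hind, hxy, Ne.symm hxy, Finset.sum_ite_eq, Finset.sum_ite_eq']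
        · simp [hind, hvx, hvy]
    have hrow : ∀ v, (∑ u, w' v u) + ((if v = x then 1 else 0) + (if v = y then 1 else 0))
        = ∑ u, w v u := by
      intro v
      rw [← hrowind v, ← Finset.sum_add_distrib]
      exact Finset.sum_congr rfl fun u _ => hkey v u
    have hsym' : ∀ u v, w' u v = w' v u := by
      intro u v
      have hiff : ((u = x ∧ v = y) ∨ (u = y ∧ v = x)) ↔ ((v = x ∧ u = y) ∨ (v = y ∧ u = x)) := by
        tauto
      simp only [hw', hind, hsym u v, hiff]
    have hloop' : ∀ v, w' v v = 0 := by
      intro v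
      have h1 := hkey v v
      have h2 := hloop v
      omega
    have htot' : (∑ u, ∑ v, w' u v) ≤ N := by
      have h1 : (∑ u, ∑ v, w' u v) + (∑ u, ∑ v, ind u v) = ∑ u, ∑ v, w u v := by
        rw [← Finset.sum_add_distrib]
        refine Finset.sum_congr rfl fun u _ => ?_
        rw [← Finset.sum_add_distrib]
        exact Finset.sum_congr rfl fun v _ => hkey u v
      have h2 : (1 : ℕ) ≤ ∑ u, ∑ v, ind u v := by
        calc (1:ℕ) = ind x y := by simp [hind]
        _ ≤ ∑ v, ind x v := Finset.single_le_sum (fun _ _ => Nat.zero_le _) (Finset.mem_univ y)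
        _ ≤ ∑ u, ∑ v, ind u v := Finset.single_le_sum (f := fun u => ∑ v, ind u v)
              (fun _ _ => Nat.zero_le _) (Finset.mem_univ x)
      omega
    have hpar' : ∀ v, Even ((∑ u, w' v u) + (if v = a then 1 else 0)
        + (if v = y then 1 else 0)) := by
      intro v
      have h1 := hpar v
      have h2 := hrow v
      rw [Nat.even_iff] at h1 ⊢
      omega
    obtain ⟨e', he'le, he'cons⟩ := ih w' a y htot' hsym' hloop' hpar'
    refine ⟨fun u v => e' u v + (if u = x ∧ v = y then 1 else 0), ?_, ?_⟩
    · intro u v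
      dsimp only
      have h1 := he'le u v
      have h2 := hkey u v
      have h3 : (if u = x ∧ v = y then 1 else 0) + (if v = x ∧ u = y then 1 else 0)
          = ind u v := by
        simp only [hind]
        by_cases hu : u = x ∧ v = y
        · obtain ⟨h4, h5⟩ := hu
          rw [h4, h5]
          simp [hxy, Ne.symm hxy]
        · by_cases hv : v = x ∧ u = y
          · obtain ⟨h4, h5⟩ := hv
            rw [h4, h5]
            simp [hxy, Ne.symm hxy]
          · simp only [if_neg hu, if_neg hv]
            rw [if_neg]
            tauto
      omega
    · intro v
      dsimp only
      have hc := he'cons v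
      have hrowe : (∑ u, (e' v u + if v = x ∧ u = y then 1 else 0))
          = (∑ u, e' v u) + (if v = x then 1 else 0) := by
        rw [Finset.sum_add_distrib]
        congr 1
        rcases eq_or_ne v x with hvx | hvx
        · simp [hvx, Finset.sum_ite_eq']
        · simp [hvx]
      have hcole : (∑ u, (e' u v + if u = x ∧ v = y then 1 else 0))
          = (∑ u, e' u v) + (if v = y then 1 else 0) := by
        rw [Finset.sum_add_distrib]
        congr 1
        rcases eq_or_ne v y with hvy | hvy
        · simp [hvy, Finset.sum_ite_eq, Finset.sum_ite_eq']
        · simp [hvy]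
      rw [hrowe, hcole]
      omega
lemma orient_lemma : ∀ (N : ℕ) (w : V → V → ℕ),
    (∑ u, ∑ v, w u v) ≤ N →
    (∀ u v, w u v = w v u) → (∀ v, w v v = 0) →
    (∀ v, Even (∑ u, w v u)) →
    ∃ d : V → V → ℕ,
      (∀ u v, d u v + d v u = w u v) ∧
      (∀ v, (∑ u, d v u) = ∑ u, d u v) := by
  intro N
  induction N with
  | zero =>
    intro w hN hsym hloop heven
    refine ⟨0, fun u v => ?_, by simp⟩
    have h1 : (∑ v, w u v) ≤ ∑ u, ∑ v, w u v :=
      Finset.single_le_sum (f := fun u => ∑ v, w u v) (fun _ _ => Nat.zero_le _)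
        (Finset.mem_univ u)
    have h2 : w u v ≤ ∑ v', w u v' :=
      Finset.single_le_sum (fun _ _ => Nat.zero_le _) (Finset.mem_univ v)
    simp only [Pi.zero_apply]
    omega
  | succ N ih =>
    intro w hN hsym hloop heven
    by_cases h0 : (∑ u, ∑ v, w u v) = 0
    · refine ⟨0, fun u v => ?_, by simp⟩
      have h1 : (∑ v, w u v) ≤ ∑ u, ∑ v, w u v :=
        Finset.single_le_sum (f := fun u => ∑ v, w u v) (fun _ _ => Nat.zero_le _)
          (Finset.mem_univ u)
      have h2 : w u v ≤ ∑ v', w u v' :=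
        Finset.single_le_sum (fun _ _ => Nat.zero_le _) (Finset.mem_univ v)
      simp only [Pi.zero_apply]
      omega
    · -- find an edge a-b
      obtain ⟨a, -, ha⟩ := Finset.exists_ne_zero_of_sum_ne_zero h0
      obtain ⟨b, -, hb⟩ := Finset.exists_ne_zero_of_sum_ne_zero ha
      have hab : a ≠ b := fun h => hb (by rw [h, hloop])
      set ind : V → V → ℕ := fun u v =>
        if (u = a ∧ v = b) ∨ (u = b ∧ v = a) then 1 else 0 with hind
      have hindle : ∀ u v, ind u v ≤ w u v := by
        intro u v
        simp only [hind]
        split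
        · rename_i h
          rcases h with ⟨h1, h2⟩ | ⟨h1, h2⟩
          · rw [h1, h2]; omega
          · rw [h1, h2, hsym]; omega
        · omega
      set w' : V → V → ℕ := fun u v => w u v - ind u v with hw'
      have hkey : ∀ u v, w' u v + ind u v = w u v := fun u v =>
        Nat.sub_add_cancel (hindle u v)
      have hrowind : ∀ v, (∑ u, ind v u)
          = (if v = a then 1 else 0) + (if v = b then 1 else 0) := by
        intro v
        rcases eq_or_ne v a with hva | hva
        · rw [hva]
          simp [hind, hab, Ne.symm hab, Finset.sum_ite_eq']
        · rcases eq_or_ne v b with hvb | hvb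
          · rw [hvb]
            simp [hind, hab, Ne.symm hab, Finset.sum_ite_eq']
          · simp [hind, hva, hvb]
      have hrow : ∀ v, (∑ u, w' v u) + ((if v = a then 1 else 0) + (if v = b then 1 else 0))
          = ∑ u, w v u := by
        intro v
        rw [← hrowind v, ← Finset.sum_add_distrib]
        exact Finset.sum_congr rfl fun u _ => hkey v u
      have hsym' : ∀ u v, w' u v = w' v u := by
        intro u v
        have hiff : ((u = a ∧ v = b) ∨ (u = b ∧ v = a)) ↔ ((v = a ∧ u = b) ∨ (v = b ∧ u = a)) := by
          tauto
        simp only [hw', hind, hsym u v, hiff]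
      have hloop' : ∀ v, w' v v = 0 := by
        intro v
        have h1 := hkey v v
        have h2 := hloop v
        omega
      have htot' : (∑ u, ∑ v, w' u v) ≤ ∑ u, ∑ v, w u v := by
        refine Finset.sum_le_sum fun u _ => Finset.sum_le_sum fun v _ => ?_
        have := hkey u v
        omega
      have hpar' : ∀ v, Even ((∑ u, w' v u) + (if v = a then 1 else 0)
          + (if v = b then 1 else 0)) := by
        intro v
        have h1 := heven v
        have h2 := hrow v
        rw [Nat.even_iff] at h1 ⊢
        omega
      obtain ⟨e, hele, hecons⟩ := walk_lemma (N + 1) w' a b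
        (le_trans htot' hN) hsym' hloop' hpar'
      -- close the walk into a circulation δ by adding the edge a → b
      set δ : V → V → ℕ := fun u v => e u v + (if u = a ∧ v = b then 1 else 0) with hδ
      have hδle : ∀ u v, δ u v + δ v u ≤ w u v := by
        intro u v
        have h1 := hele u v
        have h2 := hkey u v
        have h3 : (if u = a ∧ v = b then 1 else 0) + (if v = a ∧ u = b then 1 else 0)
            = ind u v := by
          simp only [hind]
          by_cases hu : u = a ∧ v = b
          · obtain ⟨h4, h5⟩ := hu
            rw [h4, h5]
            simp [hab, Ne.symm hab]
          · by_cases hv : v = a ∧ u = b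
            · obtain ⟨h4, h5⟩ := hv
              rw [h4, h5]
              simp [hab, Ne.symm hab]
            · simp only [if_neg hu, if_neg hv]
              rw [if_neg]
              tauto
        simp only [hδ]
        omega
      have hδrow : ∀ v, (∑ u, δ v u) = (∑ u, e v u) + (if v = a then 1 else 0) := by
        intro v
        simp only [hδ]
        rw [Finset.sum_add_distrib]
        congr 1
        rcases eq_or_ne v a with hva | hva
        · simp [hva, Finset.sum_ite_eq']
        · simp [hva]
      have hδcol : ∀ v, (∑ u, δ u v) = (∑ u, e u v) + (if v = b then 1 else 0) := by
        intro v
        simp only [hδ]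
        rw [Finset.sum_add_distrib]
        congr 1
        rcases eq_or_ne v b with hvb | hvb
        · simp [hvb, Finset.sum_ite_eq, Finset.sum_ite_eq']
        · simp [hvb]
      have hδbal : ∀ v, (∑ u, δ v u) = ∑ u, δ u v := by
        intro v
        rw [hδrow, hδcol]
        exact hecons v
      -- residual graph
      set w'' : V → V → ℕ := fun u v => w u v - δ u v - δ v u with hw''
      have hkey'' : ∀ u v, w'' u v + (δ u v + δ v u) = w u v := by
        intro u v
        have h1 := hδle u v
        simp only [hw'']
        omega
      have hsym'' : ∀ u v, w'' u v = w'' v u := by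
        intro u v
        have h1 := hkey'' u v
        have h2 := hkey'' v u
        rw [hsym u v] at h1
        omega
      have hloop'' : ∀ v, w'' v v = 0 := by
        intro v
        have h1 := hkey'' v v
        have h2 := hloop v
        omega
      have hrow'' : ∀ v, (∑ u, w'' v u) + ((∑ u, δ v u) + (∑ u, δ u v)) = ∑ u, w v u := by
        intro v
        rw [← Finset.sum_add_distrib, ← Finset.sum_add_distrib]
        refine Finset.sum_congr rfl fun u _ => ?_
        have := hkey'' v u
        omega
      have heven'' : ∀ v, Even (∑ u, w'' v u) := by
        intro v
        have h1 := heven v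
        have h2 := hrow'' v
        have h3 := hδbal v
        rw [Nat.even_iff] at h1 ⊢
        omega
      have htot'' : (∑ u, ∑ v, w'' u v) ≤ N := by
        have h1 : (∑ u, ∑ v, w'' u v) + (∑ u, ∑ v, (δ u v + δ v u)) = ∑ u, ∑ v, w u v := by
          rw [← Finset.sum_add_distrib]
          refine Finset.sum_congr rfl fun u _ => ?_
          rw [← Finset.sum_add_distrib]
          exact Finset.sum_congr rfl fun v _ => hkey'' u v
        have h2 : (1 : ℕ) ≤ δ a b := by simp [hδ]
        have h3 : δ a b ≤ ∑ v, (δ a v + δ v a) :=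
          le_trans (Nat.le_add_right _ _)
            (Finset.single_le_sum (f := fun v => δ a v + δ v a)
              (fun _ _ => Nat.zero_le _) (Finset.mem_univ b))
        have h4 : (∑ v, (δ a v + δ v a)) ≤ ∑ u, ∑ v, (δ u v + δ v u) :=
          Finset.single_le_sum (f := fun u => ∑ v, (δ u v + δ v u))
            (fun _ _ => Nat.zero_le _) (Finset.mem_univ a)
        omega
      obtain ⟨d'', hd''sum, hd''bal⟩ := ih w'' htot'' hsym'' hloop'' heven''
      refine ⟨fun u v => d'' u v + δ u v, fun u v => ?_, fun v => ?_⟩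
      · dsimp only
        have h1 := hd''sum u v
        have h2 := hkey'' u v
        omega
      · dsimp only
        have h1 : (∑ u, (d'' v u + δ v u)) = (∑ u, d'' v u) + ∑ u, δ v u :=
          Finset.sum_add_distrib
        have h2 : (∑ u, (d'' u v + δ u v)) = (∑ u, d'' u v) + ∑ u, δ u v :=
          Finset.sum_add_distrib
        rw [h1, h2, hd''bal v, hδbal v]
variable {V : Type*} [Fintype V] [DecidableEq V]

lemma birkhoff_lemma : ∀ (r : ℕ) (d : V → V → ℕ),
    (∀ v, (∑ u, d v u) = r) → (∀ v, (∑ u, d u v) = r) →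
    ∃ σ : Fin r → Equiv.Perm V,
      ∀ u v, (∑ i, if σ i u = v then 1 else 0) = d u v := by
  intro r
  induction r with
  | zero =>
    intro d hrow hcol
    refine ⟨Fin.elim0, fun u v => ?_⟩
    have h1 := hrow u
    have h2 : d u v ≤ ∑ u', d u u' :=
      Finset.single_le_sum (fun _ _ => Nat.zero_le _) (Finset.mem_univ v)
    simp only [Finset.univ_eq_empty, Finset.sum_empty]
    omega
  | succ r ih =>
    intro d hrow hcol
    -- Hall's condition for the bipartite graph of positive entries
    set t : V → Finset V := fun u => Finset.univ.filter (fun v => d u v ≠ 0) with ht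
    have hall : ∀ s : Finset V, s.card ≤ (s.biUnion t).card := by
      intro s
      have h1 : (r + 1) * s.card = ∑ u ∈ s, ∑ v, d u v := by
        rw [Finset.sum_congr rfl fun u _ => hrow u, Finset.sum_const, smul_eq_mul, mul_comm]
      have h2 : ∀ u ∈ s, (∑ v, d u v) = ∑ v ∈ t u, d u v := by
        intro u _
        rw [ht]
        exact (Finset.sum_filter_ne_zero Finset.univ).symm
      have h3 : ∀ u ∈ s, (∑ v ∈ t u, d u v) ≤ ∑ v ∈ s.biUnion t, d u v := by
        intro u hu
        exact Finset.sum_le_sum_of_subset (Finset.subset_biUnion_of_mem t hu)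
      have h4 : (∑ u ∈ s, ∑ v ∈ s.biUnion t, d u v)
          = ∑ v ∈ s.biUnion t, ∑ u ∈ s, d u v := Finset.sum_comm
      have h5 : ∀ v, (∑ u ∈ s, d u v) ≤ r + 1 := by
        intro v
        rw [← hcol v]
        exact Finset.sum_le_sum_of_subset (Finset.subset_univ s)
      have h6 : (∑ v ∈ s.biUnion t, ∑ u ∈ s, d u v) ≤ (s.biUnion t).card * (r + 1) := by
        calc (∑ v ∈ s.biUnion t, ∑ u ∈ s, d u v) ≤ ∑ v ∈ s.biUnion t, (r + 1) :=
              Finset.sum_le_sum fun v _ => h5 v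
          _ = (s.biUnion t).card * (r + 1) := by rw [Finset.sum_const, smul_eq_mul]
      have h7 : (r + 1) * s.card ≤ (r + 1) * (s.biUnion t).card := by
        calc (r + 1) * s.card = ∑ u ∈ s, ∑ v, d u v := h1
          _ = ∑ u ∈ s, ∑ v ∈ t u, d u v := Finset.sum_congr rfl h2
          _ ≤ ∑ u ∈ s, ∑ v ∈ s.biUnion t, d u v := Finset.sum_le_sum h3
          _ = ∑ v ∈ s.biUnion t, ∑ u ∈ s, d u v := h4
          _ ≤ (s.biUnion t).card * (r + 1) := h6
          _ = (r + 1) * (s.biUnion t).card := mul_comm _ _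
      exact Nat.le_of_mul_le_mul_left h7 (Nat.succ_pos r)
    obtain ⟨f, hfinj, hft⟩ := (Finset.all_card_le_biUnion_card_iff_existsInjective' t).mp hall
    have hfbij : Function.Bijective f := Finite.injective_iff_bijective.mp hfinj
    set σ₀ : Equiv.Perm V := Equiv.ofBijective f hfbij with hσ₀
    have hσ₀app : ∀ u, σ₀ u = f u := fun u => rfl
    have hσ₀pos : ∀ u v, σ₀ u = v → 1 ≤ d u v := by
      intro u v h
      have := hft u
      rw [ht] at this
      simp only [Finset.mem_filter] at this
      rw [hσ₀app] at h
      rw [h] at this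
      omega
    set d' : V → V → ℕ := fun u v => d u v - (if σ₀ u = v then 1 else 0) with hd'
    have hkey : ∀ u v, d' u v + (if σ₀ u = v then 1 else 0) = d u v := by
      intro u v
      simp only [hd']
      rcases eq_or_ne (σ₀ u) v with h | h
      · have := hσ₀pos u v h
        simp [h]
        omega
      · simp [h]
    have hrow' : ∀ v, (∑ u, d' v u) = r := by
      intro v
      have h1 : (∑ u, d' v u) + (∑ u, if σ₀ v = u then 1 else 0) = ∑ u, d v u := by
        rw [← Finset.sum_add_distrib]
        exact Finset.sum_congr rfl fun u _ => hkey v u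
      have h2 : (∑ u, if σ₀ v = u then 1 else 0) = 1 := by
        simp [Finset.sum_ite_eq]
      rw [hrow v] at h1
      omega
    have hcol' : ∀ v, (∑ u, d' u v) = r := by
      intro v
      have h1 : (∑ u, d' u v) + (∑ u, if σ₀ u = v then 1 else 0) = ∑ u, d u v := by
        rw [← Finset.sum_add_distrib]
        exact Finset.sum_congr rfl fun u _ => hkey u v
      have h2 : (∑ u, if σ₀ u = v then 1 else 0) = 1 := by
        simp [Equiv.apply_eq_iff_eq_symm_apply, Finset.sum_ite_eq']
      rw [hcol v] at h1
      omega
    obtain ⟨σ', hσ'⟩ := ih d' hrow' hcol'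
    refine ⟨Fin.cons σ₀ σ', fun u v => ?_⟩
    rw [Fin.sum_univ_succ]
    simp only [Fin.cons_zero, Fin.cons_succ]
    rw [hσ' u v]
    have := hkey u v
    omega
end

/-- Petersen's theorem: every 2r-regular loopless multigraph decomposes into r
edge-disjoint 2-factors. -/
theorem stmt5 {V : Type*} [Fintype V] [DecidableEq V]
    (w : V → V → ℕ) (r : ℕ) (hr : 0 < r)
    (hsym : ∀ u v, w u v = w v u) (hloop : ∀ v, w v v = 0)
    (hreg : ∀ v, (∑ u, w v u) = 2 * r) :
    ∃ F : Fin r → (V → V → ℕ),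
      (∀ i u v, F i u v = F i v u) ∧
      (∀ i v, F i v v = 0) ∧
      (∀ i v, (∑ u, F i v u) = 2) ∧
      (∀ u v, (∑ i, F i u v) = w u v) := by
  have heven : ∀ v, Even (∑ u, w v u) := by
    intro v
    rw [hreg v]
    exact even_two_mul r
  obtain ⟨d, hd, hbal⟩ := orient_lemma (∑ u, ∑ v, w u v) w le_rfl hsym hloop heven
  have hdw : ∀ v, (∑ u, d v u) + (∑ u, d u v) = 2 * r := by
    intro v
    rw [← hreg v, ← Finset.sum_add_distrib]
    exact Finset.sum_congr rfl fun u _ => hd v u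
  have hrowd : ∀ v, (∑ u, d v u) = r := by
    intro v
    have h1 := hdw v
    have h2 := hbal v
    omega
  have hcold : ∀ v, (∑ u, d u v) = r := by
    intro v
    have h1 := hdw v
    have h2 := hbal v
    omega
  obtain ⟨σ, hσ⟩ := birkhoff_lemma r d hrowd hcold
  have hdvv : ∀ v, d v v = 0 := by
    intro v
    have h1 := hd v v
    have h2 := hloop v
    omega
  have hfix : ∀ i v, σ i v ≠ v := by
    intro i v hiv
    have h1 := hσ v v
    rw [hdvv v] at h1
    have h2 : (if σ i v = v then 1 else 0) = 0 := by
      refine Finset.sum_eq_zero_iff.mp h1 i (Finset.mem_univ i)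
    rw [if_pos hiv] at h2
    omega
  refine ⟨fun i u v => (if σ i u = v then 1 else 0) + (if σ i v = u then 1 else 0),
    ?_, ?_, ?_, ?_⟩
  · intro i u v
    dsimp only
    omega
  · intro i v
    dsimp only
    rw [if_neg (hfix i v)]
  · intro i v
    dsimp only
    have h1 : (∑ u, ((if σ i v = u then 1 else 0) + (if σ i u = v then 1 else 0)))
        = (∑ u, if σ i v = u then 1 else 0) + (∑ u, if σ i u = v then 1 else 0) :=
      Finset.sum_add_distrib
    rw [h1]
    have h2 : (∑ u, if σ i v = u then 1 else 0) = 1 := by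
      simp [Finset.sum_ite_eq]
    have h3 : (∑ u, if σ i u = v then 1 else 0) = 1 := by
      simp [Equiv.apply_eq_iff_eq_symm_apply, Finset.sum_ite_eq']
    omega
  · intro u v
    dsimp only
    have h1 : (∑ i, ((if σ i u = v then 1 else 0) + (if σ i v = u then 1 else 0)))
        = (∑ i, if σ i u = v then 1 else 0) + (∑ i, if σ i v = u then 1 else 0) :=
      Finset.sum_add_distrib
    rw [h1, hσ u v, hσ v u]
    exact hd u v
end

section
/- In the Valiant Load Balancing scheme on a uniform full mesh of n pods with per-trunk capacity C (trunk between each ordered pod pair), serving an arbitrary admissible traffic matrix (each pod's total ingress and egress at most (n−1)C/2) with every demand split equally over the 1 direct path and the n−2 two-hop paths keeps every trunk's load at most C. -/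
/-- VLB on a uniform full mesh: equal splitting of any admissible traffic matrix over
the direct and all two-hop paths keeps every trunk's load at most its capacity C. -/
theorem stmt8 (n : ℕ) (hn : 2 ≤ n) (C : ℝ) (hC : 0 < C)
    (d : Fin n → Fin n → ℝ)
    (hd0 : ∀ i j, 0 ≤ d i j) (hdiag : ∀ i, d i i = 0)
    (hout : ∀ i, (∑ j, d i j) ≤ ((n : ℝ) - 1) * C / 2)
    (hin : ∀ i, (∑ j, d j i) ≤ ((n : ℝ) - 1) * C / 2) :
    ∀ a b : Fin n, a ≠ b →
      (d a b + (∑ j ∈ Finset.univ \ {a, b}, d a j) + ∑ i ∈ Finset.univ \ {a, b}, d i b) /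
          ((n : ℝ) - 1) ≤ C := by
  intro a b hab
  have hn1 : (0:ℝ) < (n : ℝ) - 1 := by
    have : (2:ℝ) ≤ (n:ℝ) := by exact_mod_cast hn
    linarith
  have hsplit : ∀ f : Fin n → ℝ,
      (∑ j ∈ Finset.univ \ {a, b}, f j) + (f a + f b) = ∑ j, f j := by
    intro f
    rw [← Finset.sum_pair hab]
    exact Finset.sum_sdiff (Finset.subset_univ _)
  have h1 : d a b + (∑ j ∈ Finset.univ \ {a, b}, d a j) ≤ ((n : ℝ) - 1) * C / 2 := by
    have := hsplit (fun j => d a j)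
    have hout' := hout a
    simp only [hdiag a] at this
    linarith
  have h2 : (∑ i ∈ Finset.univ \ {a, b}, d i b) ≤ ((n : ℝ) - 1) * C / 2 := by
    have := hsplit (fun i => d i b)
    have hin' := hin b
    have hab0 : 0 ≤ d a b := hd0 a b
    simp only [hdiag b] at this
    linarith
  rw [div_le_iff₀ hn1]
  nlinarith
end
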